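/- Let b₁,…,b_ℓ ∈ B(H). Then b₁,…,b_ℓ are linearly independent if and only if there exist finitely many vectors ξ₁,…,ξ_m ∈ H such that the ℓ×ℓ matrix Σₖ Q(b, ξₖ) is positive definite, where Q(b, ξ) = (⟨bⱼξ, bᵢξ⟩)_{i,j=1}^ℓ. -/

import Mathlib

open Matrix
open scoped ComplexOrder

/-- The square root of a positive semidefinite matrix (the definition Mathlib had as
`Matrix.PosSemidef.sqrt`, since removed). -/
noncomputable def Matrix.PosSemidef.sqrt {n : Type*} [Fintype n] [DecidableEq n]
    {A : Matrix n n ℂ} (hA : A.PosSemidef) : Matrix n n ℂ :=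
  hA.1.eigenvectorUnitary.1 * diagonal ((↑) ∘ (√·) ∘ hA.1.eigenvalues) *
  (star hA.1.eigenvectorUnitary : Matrix n n ℂ)

theorem Matrix.PosSemidef.posSemidef_sqrt {n : Type*} [Fintype n] [DecidableEq n]
    {A : Matrix n n ℂ} (hA : A.PosSemidef) : hA.sqrt.PosSemidef := by
  unfold Matrix.PosSemidef.sqrt
  have h := PosSemidef.mul_mul_conjTranspose_same
    (posSemidef_diagonal_iff.mpr fun i => by
      simp only [Function.comp_apply, Complex.zero_le_real]
      exact Real.sqrt_nonneg _ : (diagonal ((↑) ∘ (√·) ∘ hA.1.eigenvalues : n → ℂ)).PosSemidef)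
    (hA.1.eigenvectorUnitary.1)
  convert h using 2
  exact Matrix.star_eq_conjTranspose _

/-- The product `√X * Y * √X` is positive semidefinite. -/
theorem sqrt_mul_mul_sqrt_posSemidef {n : Type*} [Fintype n] [DecidableEq n]
    {X Y : Matrix n n ℂ} (hX : X.PosSemidef) (hY : Y.PosSemidef) :
    (hX.sqrt * Y * hX.sqrt).PosSemidef := by
  have h := hY.conjTranspose_mul_mul_same (B := hX.sqrt)
  rwa [hX.posSemidef_sqrt.isHermitian.eq] at h

/-- The tracial geometric mean `tgm(X,Y) = trace √(√X·Y·√X)`. -/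
noncomputable def tgm {n : Type*} [Fintype n] [DecidableEq n]
    {X Y : Matrix n n ℂ} (hX : X.PosSemidef) (hY : Y.PosSemidef) : ℝ :=
  ((sqrt_mul_mul_sqrt_posSemidef hX hY).sqrt.trace).re

/-! A finite family of functions is linearly independent as soon as it is so on finitely many
points: the kernels of the evaluated linear combinations are subspaces of the finite-dimensional
space of coefficients `ℂ^ℓ` with trivial intersection, so by the descending chain condition
finitely many of them already have trivial intersection. With `Σₖ Q(b, ξₖ)` recognised as the
Gram matrix of the vectors `(bᵢ ξₖ)ₖ` of `H^m`, the theorem becomes the Gram criterion for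
linear independence. -/

theorem exists_fin_iInf_comp_eq_iInf {α ι : Type*} [CompleteLattice α] [WellFoundedLT α]
    (f : ι → α) : ∃ (m : ℕ) (ξ : Fin m → ι), ⨅ k, f (ξ k) = ⨅ i, f i := by
  have hc : IsCompactElement (OrderDual.toDual (⨅ i, f i)) :=
    (CompleteLattice.isSupFiniteCompact_iff_all_elements_compact αᵒᵈ).mp
      (CompleteLattice.WellFoundedGT.isSupFiniteCompact αᵒᵈ) _
  obtain ⟨s, hs⟩ :=
    CompleteLattice.IsCompactElement.exists_finset_of_le_iSup _ hc (OrderDual.toDual ∘ f) le_rfl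
  refine ⟨s.card, (↑) ∘ s.equivFin.symm, le_antisymm ?_ (le_iInf_comp f _)⟩
  calc ⨅ k, f (s.equivFin.symm k) = ⨅ i : s, f i :=
        s.equivFin.symm.iInf_comp (g := fun i : s => f i)
    _ = ⨅ i ∈ s, f i := iInf_subtype'' ..
    _ ≤ ⨅ i, f i := hs

theorem Fintype.ker_linearCombination_eq_iInf_ker_apply {R X V ι : Type*} [Semiring R]
    [AddCommMonoid V] [Module R V] [Fintype ι] (b : ι → X → V) :
    LinearMap.ker (Fintype.linearCombination R b) =
      ⨅ x, LinearMap.ker (Fintype.linearCombination R (b · x)) := by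
  ext c
  simp [Submodule.mem_iInf, funext_iff, Fintype.linearCombination_apply, Finset.sum_apply]

theorem linearIndependent_iff_exists_linearIndependent_eval {K X V ι : Type*} [Ring K]
    [IsArtinianRing K] [AddCommGroup V] [Module K V] [Fintype ι] (b : ι → X → V) :
    LinearIndependent K b ↔
      ∃ (m : ℕ) (ξ : Fin m → X), LinearIndependent K fun i k => b i (ξ k) := by
  simp only [linearIndependent_iff_injective_fintypeLinearCombination, ← LinearMap.ker_eq_bot,
    Fintype.ker_linearCombination_eq_iInf_ker_apply]
  obtain ⟨m, ξ, hξ⟩ :=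
    exists_fin_iInf_comp_eq_iInf fun x => LinearMap.ker (Fintype.linearCombination K (b · x))
  exact ⟨fun h => ⟨m, ξ, hξ.trans h⟩,
    fun ⟨_, η, h⟩ => eq_bot_iff.mpr (h ▸ le_iInf_comp _ η)⟩

theorem WithLp.linearIndependent_toLp_iff {𝕜 E ι : Type*} [Semiring 𝕜] [AddCommGroup E]
    [Module 𝕜 E] (p : ENNReal) (v : ι → E) :
    LinearIndependent 𝕜 (fun i => WithLp.toLp p (v i)) ↔ LinearIndependent 𝕜 v :=
  (WithLp.linearEquiv p 𝕜 E).symm.toLinearMap.linearIndependent_iff_of_injOn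
    (WithLp.linearEquiv p 𝕜 E).symm.injective.injOn

theorem ContinuousLinearMap.linearIndependent_coeFn_iff {𝕜 E F ι : Type*} [CommSemiring 𝕜]
    [TopologicalSpace E] [AddCommMonoid E] [Module 𝕜 E]
    [TopologicalSpace F] [AddCommMonoid F] [Module 𝕜 F] [ContinuousConstSMul 𝕜 F]
    [ContinuousAdd F] (b : ι → E →L[𝕜] F) :
    LinearIndependent 𝕜 (fun i => ⇑(b i)) ↔ LinearIndependent 𝕜 b :=
  (LinearMap.ltoFun 𝕜 E F 𝕜 ∘ₗ ContinuousLinearMap.coeLM 𝕜).linearIndependent_iff_of_injOn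
    DFunLike.coe_injective.injOn

theorem Matrix.gram_toLp_eq_of_sum_inner {𝕜 E ι κ : Type*} [RCLike 𝕜] [NormedAddCommGroup E]
    [InnerProductSpace 𝕜 E] [Fintype κ] (v : ι → κ → E) :
    gram 𝕜 (fun i => WithLp.toLp 2 (v i)) =
      of fun i j => ∑ k, inner 𝕜 (v i k) (v j k) := by
  ext i j
  simp [gram, PiLp.inner_apply]

theorem linearIndependent_iff_exists_posDef_sum_general
    {H : Type*} [NormedAddCommGroup H] [InnerProductSpace ℂ H]
    {ℓ : ℕ} (b : Fin ℓ → (H →L[ℂ] H)) :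
    LinearIndependent ℂ b ↔
      ∃ (m : ℕ) (ξ : Fin m → H),
        (Matrix.of fun i j => ∑ k, (inner ℂ ((b i) (ξ k)) ((b j) (ξ k)) : ℂ)).PosDef := by
  simp only [← Matrix.gram_toLp_eq_of_sum_inner, posDef_gram_iff_linearIndependent,
    WithLp.linearIndependent_toLp_iff]
  rw [← ContinuousLinearMap.linearIndependent_coeFn_iff,
    linearIndependent_iff_exists_linearIndependent_eval]

/-- `b₁,…,b_ℓ ∈ B(H)` are linearly independent iff there are finitely many vectors
`ξ₁,…,ξ_m ∈ H` such that `Σₖ Q(b, ξₖ)` is positive definite, where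
`Q(b, ξ)ᵢⱼ = ⟨bⱼξ, bᵢξ⟩`. -/
theorem linearIndependent_iff_exists_posDef_sum
    {H : Type*} [NormedAddCommGroup H] [InnerProductSpace ℂ H] [CompleteSpace H]
    {ℓ : ℕ} (hℓ : 1 ≤ ℓ) (b : Fin ℓ → (H →L[ℂ] H)) :
    LinearIndependent ℂ b ↔
      ∃ (m : ℕ) (ξ : Fin m → H),
        (Matrix.of fun i j => ∑ k, (inner ℂ ((b i) (ξ k)) ((b j) (ξ k)) : ℂ)).PosDef :=
  linearIndependent_iff_exists_posDef_sum_general b
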